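/- arXiv:math/0307372 — 3 statements merged into one kernel-verified Lean document; each statement's English description precedes it below -/
import Mathlib

section
/- Under hypotheses (A)–(C), if G(x₁) ≥ G(x₂), then every limit cycle of the Liénard system x' = y − F(x), y' = −g(x) intersects the line x = x₂. -/
/-- `(x, y)` is a nonconstant `T`-periodic solution of the Liénard system
`x' = y - F(x)`, `y' = -g(x)`. -/
def IsPeriodicSol (F g : ℝ → ℝ) (x y : ℝ → ℝ) (T : ℝ) : Prop :=
  0 < T ∧ (∀ t, HasDerivAt x (y t - F (x t)) t) ∧
  (∀ t, HasDerivAt y (-(g (x t))) t) ∧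
  (∀ t, x (t + T) = x t ∧ y (t + T) = y t) ∧
  ¬ ∃ c d : ℝ, ∀ t, x t = c ∧ y t = d

/-- The orbit of a solution in the phase plane. -/
def orbit (x y : ℝ → ℝ) : Set (ℝ × ℝ) :=
  Set.range fun t => (x t, y t)

/-- A limit cycle: an isolated periodic orbit, i.e. a periodic orbit possessing a
neighbourhood containing no other periodic orbit. -/
def IsLimitCycle (F g : ℝ → ℝ) (x y : ℝ → ℝ) (T : ℝ) : Prop :=
  IsPeriodicSol F g x y T ∧
  ∃ U : Set (ℝ × ℝ), IsOpen U ∧ orbit x y ⊆ U ∧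
    ∀ x' y' : ℝ → ℝ, ∀ T' : ℝ, IsPeriodicSol F g x' y' T' → orbit x' y' ⊆ U →
      orbit x' y' = orbit x y

open Filter Set Topology

/-- Under hypotheses (A)–(C), if `G(x₁) ≥ G(x₂)` then every limit cycle of the
Liénard system intersects the line `x = x₂`. -/
theorem limit_cycle_intersects_left_line
    (f g : ℝ → ℝ) (hf : Continuous f) (hg : LocallyLipschitz g)
    (δ : ℝ) (hδ : 0 < δ) (hf0 : f 0 < 0) (hfpos : ∀ x : ℝ, δ < |x| → f x > 0)
    (hgsign : ∀ x : ℝ, x ≠ 0 → x * g x > 0)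
    (F G : ℝ → ℝ) (hF : ∀ x, F x = ∫ ξ in (0:ℝ)..x, f ξ)
    (hG : ∀ x, G x = ∫ ξ in (0:ℝ)..x, g ξ)
    (x₁ x₂ : ℝ) (hx₂ : x₂ < 0) (hx₁ : 0 < x₁)
    (hzeros : ∀ x, F x = 0 ↔ x = 0 ∨ x = x₁ ∨ x = x₂)
    (htrans : f x₁ ≠ 0 ∧ f x₂ ≠ 0)
    (hmono : StrictMonoOn F (Set.Iic x₂) ∧ StrictMonoOn F (Set.Ici x₁))
    (hGG : G x₁ ≥ G x₂) :
    ∀ x y : ℝ → ℝ, ∀ T : ℝ, IsLimitCycle F g x y T → ∃ t, x t = x₂ := by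
  rintro x y T ⟨⟨hT, hx, hy, hper, hnc⟩, -⟩
  by_contra hcon
  push_neg at hcon
  -- continuity of the data
  have hcx : Continuous x := by
    rw [continuous_iff_continuousAt]; exact fun t => (hx t).continuousAt
  have hcy : Continuous y := by
    rw [continuous_iff_continuousAt]; exact fun t => (hy t).continuousAt
  have hgc : Continuous g := hg.continuous
  have hFfun : F = fun u => ∫ ξ in (0:ℝ)..u, f ξ := funext hF
  have hGfun : G = fun u => ∫ ξ in (0:ℝ)..u, g ξ := funext hG
  have hF' : ∀ u, HasDerivAt F (f u) u := by
    intro u; rw [hFfun]; exact (hf.integral_hasStrictDerivAt 0 u).hasDerivAt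
  have hG' : ∀ u, HasDerivAt G (g u) u := by
    intro u; rw [hGfun]; exact (hgc.integral_hasStrictDerivAt 0 u).hasDerivAt
  have hFc : Continuous F := by
    rw [continuous_iff_continuousAt]; exact fun u => (hF' u).continuousAt
  have hGc : Continuous G := by
    rw [continuous_iff_continuousAt]; exact fun u => (hG' u).continuousAt
  have hF0 : F 0 = 0 := by rw [hF 0, intervalIntegral.integral_same]
  have hgpos : ∀ v : ℝ, 0 < v → 0 < g v := by
    intro v hv; nlinarith [hgsign v (ne_of_gt hv)]
  have hgneg : ∀ v : ℝ, v < 0 → g v < 0 := by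
    intro v hv; nlinarith [hgsign v (ne_of_lt hv)]
  have hg0 : g 0 = 0 := by
    have h1 : 0 ≤ g 0 := by
      have ht : Tendsto g (𝓝[>] (0:ℝ)) (𝓝 (g 0)) :=
        (hgc.tendsto 0).mono_left nhdsWithin_le_nhds
      refine ge_of_tendsto ht ?_
      filter_upwards [self_mem_nhdsWithin] with v hv
      exact (hgpos v hv).le
    have h2 : g 0 ≤ 0 := by
      have ht : Tendsto g (𝓝[<] (0:ℝ)) (𝓝 (g 0)) :=
        (hgc.tendsto 0).mono_left nhdsWithin_le_nhds
      refine le_of_tendsto ht ?_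
      filter_upwards [self_mem_nhdsWithin] with v hv
      exact (hgneg v hv).le
    linarith
  -- sign of F inside (x₂, x₁)
  have hFneg : ∀ v, 0 < v → v < x₁ → F v < 0 := by
    intro v hv0 hv1
    rcases lt_trichotomy (F v) 0 with h | h | h
    · exact h
    · exfalso; rcases (hzeros v).1 h with h0 | h0 | h0 <;> linarith
    · exfalso
      have hslope : Tendsto (slope F 0) (𝓝[>] (0:ℝ)) (𝓝 (f 0)) :=
        (hasDerivAt_iff_tendsto_slope.1 (hF' 0)).mono_left
          (nhdsWithin_mono _ fun s hs => ne_of_gt hs)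
      have hev : ∀ᶠ s in 𝓝[>] (0:ℝ), slope F 0 s < 0 := hslope.eventually_lt_const hf0
      have hmem : Set.Ioo (0:ℝ) v ∈ 𝓝[>] (0:ℝ) :=
        Ioo_mem_nhdsGT_of_mem ⟨le_refl _, hv0⟩
      obtain ⟨w, hws, hwm⟩ := (hev.and (eventually_of_mem hmem fun s hs => hs)).exists
      have hFw : F w < 0 := by
        rw [slope_def_field, hF0, sub_zero, sub_zero] at hws
        have hw0 : 0 < w := hwm.1
        rcases div_neg_iff.1 hws with ⟨h1, h2⟩ | ⟨h1, h2⟩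
        · linarith
        · exact h1
      have h0mem : (0:ℝ) ∈ Set.Ioo (F w) (F v) := ⟨hFw, h⟩
      obtain ⟨z, hz, hz0⟩ := intermediate_value_Ioo hwm.2.le hFc.continuousOn h0mem
      rcases (hzeros z).1 hz0 with h0 | h0 | h0
      · exact absurd h0 (ne_of_gt (lt_trans hwm.1 hz.1))
      · exact absurd h0 (ne_of_lt (lt_trans hz.2 hv1))
      · exact absurd h0 (ne_of_gt (lt_trans hx₂ (lt_trans hwm.1 hz.1)))
  have hFpos : ∀ v, x₂ < v → v < 0 → 0 < F v := by
    intro v hv2 hv0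
    rcases lt_trichotomy (F v) 0 with h | h | h
    · exfalso
      have hslope : Tendsto (slope F 0) (𝓝[<] (0:ℝ)) (𝓝 (f 0)) :=
        (hasDerivAt_iff_tendsto_slope.1 (hF' 0)).mono_left
          (nhdsWithin_mono _ fun s hs => ne_of_lt hs)
      have hev : ∀ᶠ s in 𝓝[<] (0:ℝ), slope F 0 s < 0 := hslope.eventually_lt_const hf0
      have hmem : Set.Ioo v (0:ℝ) ∈ 𝓝[<] (0:ℝ) :=
        Ioo_mem_nhdsLT_of_mem ⟨hv0, le_refl _⟩
      obtain ⟨w, hws, hwm⟩ := (hev.and (eventually_of_mem hmem fun s hs => hs)).exists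
      have hFw : 0 < F w := by
        rw [slope_def_field, hF0, sub_zero, sub_zero] at hws
        have hw0 : w < 0 := hwm.2
        rcases div_neg_iff.1 hws with ⟨h1, h2⟩ | ⟨h1, h2⟩
        · exact h1
        · linarith
      have h0mem : (0:ℝ) ∈ Set.Ioo (F v) (F w) := ⟨h, hFw⟩
      obtain ⟨z, hz, hz0⟩ := intermediate_value_Ioo hwm.1.le hFc.continuousOn h0mem
      rcases (hzeros z).1 hz0 with h0 | h0 | h0
      · exact absurd h0 (ne_of_lt (lt_trans hz.2 hwm.2))
      · exact absurd h0 (ne_of_lt (lt_trans (lt_trans hz.2 hwm.2) hx₁))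
      · exact absurd h0 (ne_of_gt (lt_trans hv2 hz.1))
    · exfalso; rcases (hzeros v).1 h with h0 | h0 | h0 <;> linarith
    · exact h
  -- periodic shifting machinery
  have hxper : ∀ t, x (t + T) = x t := fun t => (hper t).1
  have hyper : ∀ t, y (t + T) = y t := fun t => (hper t).2
  have shift : ∀ h : ℝ → ℝ, (∀ t, h (t + T) = h t) → ∀ (k : ℕ) (t), h (t + k * T) = h t := by
    intro h hp k
    induction k with
    | zero => intro t; simp
    | succ n ih =>
      intro t
      have he : t + ((n : ℝ) + 1) * T = t + n * T + T := by ring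
      push_cast
      rw [he, hp, ih]
  have shift_le : ∀ h : ℝ → ℝ, (∀ t, h (t + T) = h t) →
      ∀ t B : ℝ, ∃ t', t' ≤ B ∧ h t' = h t := by
    intro h hp t B
    obtain ⟨k, hk⟩ := exists_nat_gt ((t - B) / T)
    refine ⟨t - k * T, ?_, ?_⟩
    · have := (div_lt_iff₀ hT).1 hk
      linarith
    · have := shift h hp k (t - k * T)
      rw [show t - k * T + k * T = t by ring] at this
      exact this.symm
  have shift_ge : ∀ h : ℝ → ℝ, (∀ t, h (t + T) = h t) →
      ∀ t B : ℝ, ∃ t', B ≤ t' ∧ h t' = h t := by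
    intro h hp t B
    obtain ⟨k, hk⟩ := exists_nat_gt ((B - t) / T)
    refine ⟨t + k * T, ?_, shift h hp k t⟩
    have := (div_lt_iff₀ hT).1 hk
    linarith
  have const_of_mono : ∀ h : ℝ → ℝ, (∀ t, h (t + T) = h t) → Monotone h →
      ∀ s t, h s = h t := by
    intro h hp hm s t
    have key : ∀ a b : ℝ, h a ≤ h b := by
      intro a b
      obtain ⟨t', ht', he⟩ := shift_ge h hp b a
      calc h a ≤ h t' := hm ht'
        _ = h b := he
    exact le_antisymm (key s t) (key t s)
  -- nonconstancy: x ≡ 0 is impossible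
  have hnc0 : ¬ ∀ t, x t = 0 := by
    intro hall
    apply hnc
    refine ⟨0, 0, fun t => ⟨hall t, ?_⟩⟩
    have h0 : HasDerivAt x 0 t :=
      (hasDerivAt_const t (0:ℝ)).congr_of_eventuallyEq
        (Eventually.of_forall fun s => hall s)
    have hu := (hx t).unique h0
    rw [hall t, hF0] at hu
    linarith
  -- x takes positive and negative values
  have hxpos : ∃ t, 0 < x t := by
    by_contra hno; push_neg at hno
    have hmy : Monotone y := by
      apply monotone_of_deriv_nonneg (fun t => (hy t).differentiableAt)
      intro t
      rw [(hy t).deriv]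
      rcases lt_or_eq_of_le (hno t) with h | h
      · linarith [hgneg _ h]
      · rw [h, hg0]; norm_num
    have hconst := const_of_mono y hyper hmy
    have hgz : ∀ t, g (x t) = 0 := by
      intro t
      have h0 : HasDerivAt y 0 t :=
        (hasDerivAt_const t (y 0)).congr_of_eventuallyEq
          (Eventually.of_forall fun s => hconst s 0)
      have hu := (hy t).unique h0
      linarith
    apply hnc0
    intro t
    rcases lt_or_eq_of_le (hno t) with h | h
    · exact absurd (hgz t) (ne_of_lt (hgneg _ h))
    · exact h
  have hxneg : ∃ t, x t < 0 := by
    by_contra hno; push_neg at hno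
    have hmy : Monotone (fun t => -y t) := by
      apply monotone_of_deriv_nonneg
      · exact fun t => ((hy t).neg).differentiableAt
      intro t
      have hd : HasDerivAt (fun s => -y s) (-(-(g (x t)))) t := (hy t).neg
      rw [hd.deriv]
      rcases lt_or_eq_of_le (hno t) with h | h
      · linarith [hgpos _ h]
      · rw [← h, hg0]; norm_num
    have hconst := const_of_mono (fun t => -y t)
      (fun t => by simp [hyper t]) hmy
    have hgz : ∀ t, g (x t) = 0 := by
      intro t
      have h0 : HasDerivAt (fun s => -y s) 0 t :=
        (hasDerivAt_const t (-y 0)).congr_of_eventuallyEq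
          (Eventually.of_forall fun s => hconst s 0)
      have hu := ((hy t).neg).unique h0
      simp at hu
      linarith
    apply hnc0
    intro t
    rcases lt_or_eq_of_le (hno t) with h | h
    · exact absurd (hgz t) (ne_of_gt (hgpos _ h))
    · exact h.symm
  obtain ⟨tp, htp⟩ := hxpos
  obtain ⟨tn, htn⟩ := hxneg
  -- x stays strictly above x₂
  have hxgt : ∀ t, x₂ < x t := by
    intro t
    rcases lt_or_ge x₂ (x t) with h | h
    · exact h
    · exfalso
      have hmem : x₂ ∈ Set.uIcc (x t) (x tp) := by
        rw [Set.mem_uIcc]; left; exact ⟨h, (lt_trans hx₂ htp).le⟩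
      obtain ⟨s, _, hs⟩ := intermediate_value_uIcc hcx.continuousOn hmem
      exact hcon s hs
  -- the energy function
  set c := G x₂ with hcdef
  set E : ℝ → ℝ := fun t => y t * y t / 2 + G (x t) with hEdef
  have hEt : ∀ t, E t = y t * y t / 2 + G (x t) := fun _ => rfl
  have hE : ∀ t, HasDerivAt E (-(g (x t) * F (x t))) t := by
    intro t
    have h1 : HasDerivAt (fun s => y s * y s / 2)
        ((-(g (x t)) * y t + y t * -(g (x t))) / 2) t := ((hy t).mul (hy t)).div_const 2
    have h2 : HasDerivAt (fun s => G (x s)) (g (x t) * (y t - F (x t))) t :=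
      (hG' (x t)).comp t (hx t)
    have h3 := h1.add h2
    exact h3.congr_deriv (by ring)
  have hEcont : Continuous E := ((hcy.mul hcy).div_const 2).add (hGc.comp hcx)
  have hEper : ∀ t, E (t + T) = E t := by
    intro t
    rw [hEt, hEt, hxper, hyper]
  -- G is monotone on the nonnegative axis
  have hGmono0 : ∀ a b : ℝ, 0 ≤ a → a ≤ b → G a ≤ G b := by
    intro a b ha hab
    have hsplit : G b - G a = ∫ ξ in a..b, g ξ := by
      rw [hG a, hG b]
      exact intervalIntegral.integral_interval_sub_left
        (hgc.intervalIntegrable 0 b) (hgc.intervalIntegrable 0 a)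
    have hnn : 0 ≤ ∫ ξ in a..b, g ξ := by
      apply intervalIntegral.integral_nonneg hab
      intro u hu
      rcases lt_or_eq_of_le (le_trans ha hu.1) with h | h
      · exact (hgpos u h).le
      · rw [← h, hg0]
    linarith
  -- G is strictly below c = G x₂ on (x₂, 0]
  have hGlt : ∀ v : ℝ, x₂ < v → v ≤ 0 → G v < c := by
    intro v hv2 hv0
    have hsplit : G v - G x₂ = ∫ ξ in x₂..v, g ξ := by
      rw [hG x₂, hG v]
      exact intervalIntegral.integral_interval_sub_left
        (hgc.intervalIntegrable 0 v) (hgc.intervalIntegrable 0 x₂)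
    have hpos : 0 < ∫ ξ in x₂..v, -g ξ := by
      apply intervalIntegral.intervalIntegral_pos_of_pos_on ((hgc.neg).intervalIntegrable x₂ v) _ hv2
      intro u hu
      have : u < 0 := lt_of_lt_of_le hu.2 hv0
      simp only [Pi.neg_apply, neg_pos]
      exact hgneg u this
    rw [intervalIntegral.integral_neg] at hpos
    rw [hcdef]
    linarith
  -- whenever E t < c, the energy derivative is nonnegative
  have hkey : ∀ t, E t < c → 0 ≤ deriv E t := by
    intro t ht
    rw [(hE t).deriv]
    have hlt : x t < x₁ := by
      by_contra hge; push_neg at hge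
      have h1 : G x₁ ≤ G (x t) := hGmono0 x₁ (x t) hx₁.le hge
      have h2 : 0 ≤ y t * y t / 2 := by nlinarith [mul_self_nonneg (y t)]
      rw [hEt] at ht
      rw [hcdef] at ht
      linarith
    rcases lt_trichotomy (x t) 0 with h | h | h
    · nlinarith [hgneg _ h, hFpos _ (hxgt t) h]
    · rw [h, hF0, mul_zero, neg_zero]
    · nlinarith [hgpos _ h, hFneg _ h hlt]
  -- Step: E ≥ c everywhere
  have hEc : ∀ t, c ≤ E t := by
    by_contra hno; push_neg at hno
    obtain ⟨t₀, ht₀⟩ := hno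
    by_cases hA : ∃ s, s ≤ t₀ ∧ c ≤ E s
    · obtain ⟨s₀', hs₀', hEs₀'⟩ := hA
      set A := {s : ℝ | s ≤ t₀ ∧ c ≤ E s} with hAdef
      have hclosed : IsClosed A := by
        have : A = Set.Iic t₀ ∩ {s | c ≤ E s} := by
          ext s; simp [hAdef, Set.mem_Iic]
        rw [this]
        exact isClosed_Iic.inter (isClosed_le continuous_const hEcont)
      have hbdd : BddAbove A := ⟨t₀, fun s hs => hs.1⟩
      set a := sSup A with hadef
      have haA : a ∈ A := hclosed.csSup_mem ⟨s₀', hs₀', hEs₀'⟩ hbdd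
      have halt : a < t₀ := by
        rcases lt_or_eq_of_le haA.1 with h | h
        · exact h
        · exfalso; rw [h] at haA; linarith [haA.2]
      have hIoc : ∀ s ∈ Set.Ioc a t₀, E s < c := by
        intro s hs
        by_contra hge; push_neg at hge
        have hmem : s ∈ A := ⟨hs.2, hge⟩
        exact absurd (le_csSup hbdd hmem) (not_le.2 hs.1)
      have hmonoE : MonotoneOn E (Set.Icc a t₀) := by
        apply monotoneOn_of_deriv_nonneg (convex_Icc a t₀) hEcont.continuousOn
        · intro s _; exact (hE s).differentiableAt.differentiableWithinAt
        · intro s hs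
          rw [interior_Icc] at hs
          exact hkey s (hIoc s ⟨hs.1, hs.2.le⟩)
      have := hmonoE ⟨le_refl a, halt.le⟩ ⟨halt.le, le_refl t₀⟩ halt.le
      linarith [haA.2]
    · push_neg at hA
      have hall : ∀ t, E t < c := by
        intro t
        obtain ⟨t', ht', he⟩ := shift_le E hEper t t₀
        rw [← he]
        exact hA t' ht'
      have hmonoE : Monotone E :=
        monotone_of_deriv_nonneg (fun s => (hE s).differentiableAt)
          (fun s => hkey s (hall s))
      have hconst := const_of_mono E hEper hmonoE
      have hzero : ∀ t, g (x t) * F (x t) = 0 := by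
        intro t
        have h0 : HasDerivAt E 0 t :=
          (hasDerivAt_const t (E 0)).congr_of_eventuallyEq
            (Eventually.of_forall fun s => hconst s 0)
        have hu := (hE t).unique h0
        linarith
      apply hnc0
      intro t
      rcases mul_eq_zero.1 (hzero t) with h | h
      · by_contra hne
        rcases lt_or_gt_of_ne hne with hlt | hgt
        · exact absurd h (ne_of_lt (hgneg _ hlt))
        · exact absurd h (ne_of_gt (hgpos _ hgt))
      · rcases (hzeros _).1 h with h0 | h0 | h0
        · exact h0
        · exfalso
          have h2' := hall t
          rw [hEt, h0, hcdef] at h2'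
          nlinarith
        · exact absurd h0 (hcon t)
  -- Step: find τ with y τ = 0 and x₂ < x τ ≤ 0
  obtain ⟨p, hpu, hpe⟩ := shift_le x hxper tp tn
  obtain ⟨q, hqu, hqe⟩ := shift_ge x hxper tp tn
  have hxp : 0 < x p := by rw [hpe]; exact htp
  have hxq : 0 < x q := by rw [hqe]; exact htp
  set K₀ := Set.Icc p tn ∩ {s : ℝ | 0 ≤ x s} with hK₀def
  have hK₀c : IsCompact K₀ :=
    isCompact_Icc.inter_right (isClosed_le continuous_const hcx)
  have hK₀ne : K₀.Nonempty := ⟨p, ⟨le_refl p, hpu⟩, hxp.le⟩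
  set s₀ := sSup K₀ with hs₀def
  have hs₀ : s₀ ∈ K₀ := hK₀c.sSup_mem hK₀ne
  have hs₀u : s₀ < tn := by
    rcases lt_or_eq_of_le hs₀.1.2 with h | h
    · exact h
    · exfalso; rw [h] at hs₀; exact absurd hs₀.2 (not_le.2 htn)
  have hneg₀ : ∀ s ∈ Set.Ioc s₀ tn, x s < 0 := by
    intro s hs
    by_contra hge; push_neg at hge
    have hmem : s ∈ K₀ := ⟨⟨le_trans hs₀.1.1 hs.1.le, hs.2⟩, hge⟩
    exact absurd (le_csSup hK₀c.bddAbove hmem) (not_le.2 hs.1)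
  have hxs₀ : x s₀ = 0 := by
    refine le_antisymm ?_ hs₀.2
    have ht : Tendsto x (𝓝[>] s₀) (𝓝 (x s₀)) :=
      (hcx.tendsto s₀).mono_left nhdsWithin_le_nhds
    refine le_of_tendsto ht ?_
    filter_upwards [Ioc_mem_nhdsGT_of_mem ⟨le_refl s₀, hs₀u⟩] with s hs
    exact (hneg₀ s hs).le
  set K₁ := Set.Icc tn q ∩ {s : ℝ | 0 ≤ x s} with hK₁def
  have hK₁c : IsCompact K₁ :=
    isCompact_Icc.inter_right (isClosed_le continuous_const hcx)
  have hK₁ne : K₁.Nonempty := ⟨q, ⟨hqu, le_refl q⟩, hxq.le⟩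
  set s₁ := sInf K₁ with hs₁def
  have hs₁ : s₁ ∈ K₁ := hK₁c.sInf_mem hK₁ne
  have hs₁u : tn < s₁ := by
    rcases lt_or_eq_of_le hs₁.1.1 with h | h
    · exact h
    · exfalso; rw [← h] at hs₁; exact absurd hs₁.2 (not_le.2 htn)
  have hneg₁ : ∀ s ∈ Set.Ico tn s₁, x s < 0 := by
    intro s hs
    by_contra hge; push_neg at hge
    have hmem : s ∈ K₁ := ⟨⟨hs.1, le_trans hs.2.le hs₁.1.2⟩, hge⟩
    exact absurd (csInf_le hK₁c.bddBelow hmem) (not_le.2 hs.2)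
  have hxs₁ : x s₁ = 0 := by
    refine le_antisymm ?_ hs₁.2
    have ht : Tendsto x (𝓝[<] s₁) (𝓝 (x s₁)) :=
      (hcx.tendsto s₁).mono_left nhdsWithin_le_nhds
    refine le_of_tendsto ht ?_
    filter_upwards [Ico_mem_nhdsLT_of_mem ⟨hs₁u, le_refl s₁⟩] with s hs
    exact (hneg₁ s hs).le
  have hs01 : s₀ < s₁ := lt_trans hs₀u hs₁u
  have hniio : ∀ s ∈ Set.Ioo s₀ s₁, x s < 0 := by
    intro s hs
    rcases le_or_gt s tn with h | h
    · exact hneg₀ s ⟨hs.1, h⟩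
    · exact hneg₁ s ⟨h.le, hs.2⟩
  -- y s₀ ≤ 0
  have hys₀ : y s₀ ≤ 0 := by
    have hd : HasDerivAt x (y s₀) s₀ := by
      have h := hx s₀
      rwa [hxs₀, hF0, sub_zero] at h
    have hslope : Tendsto (slope x s₀) (𝓝[>] s₀) (𝓝 (y s₀)) :=
      (hasDerivAt_iff_tendsto_slope.1 hd).mono_left
        (nhdsWithin_mono _ fun s hs => ne_of_gt hs)
    refine le_of_tendsto hslope ?_
    filter_upwards [Ioo_mem_nhdsGT_of_mem ⟨le_refl s₀, hs01⟩] with s hs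
    rw [slope_def_field, hxs₀, sub_zero]
    exact (div_neg_of_neg_of_pos (hniio s hs) (by linarith [hs.1])).le
  -- y s₁ ≥ 0
  have hys₁ : 0 ≤ y s₁ := by
    have hd : HasDerivAt x (y s₁) s₁ := by
      have h := hx s₁
      rwa [hxs₁, hF0, sub_zero] at h
    have hslope : Tendsto (slope x s₁) (𝓝[<] s₁) (𝓝 (y s₁)) :=
      (hasDerivAt_iff_tendsto_slope.1 hd).mono_left
        (nhdsWithin_mono _ fun s hs => ne_of_lt hs)
    refine ge_of_tendsto hslope ?_
    filter_upwards [Ioo_mem_nhdsLT_of_mem ⟨hs01, le_refl s₁⟩] with s hs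
    rw [slope_def_field, hxs₁, sub_zero]
    exact (div_pos_of_neg_of_neg (hniio s hs) (by linarith [hs.2])).le
  -- find τ where y vanishes
  have h0mem : (0:ℝ) ∈ Set.Icc (y s₀) (y s₁) := ⟨hys₀, hys₁⟩
  obtain ⟨τ, hτmem, hτ⟩ := intermediate_value_Icc hs01.le hcy.continuousOn h0mem
  have hxτ : x τ ≤ 0 := by
    rcases eq_or_lt_of_le hτmem.1 with h | h
    · rw [← h, hxs₀]
    · rcases eq_or_lt_of_le hτmem.2 with h' | h'
      · rw [h', hxs₁]
      · exact (hniio τ ⟨h, h'⟩).le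
  -- final contradiction
  have hEτ : E τ = G (x τ) := by
    rw [hEt, hτ]; ring
  have h1 := hEc τ
  have h2 := hGlt (x τ) (hxgt τ) hxτ
  rw [hEτ] at h1
  linarith
end

section
/- Under hypotheses (A)–(C), if G(x₁) ≤ G(x₂), then every limit cycle of the Liénard system x' = y − F(x), y' = −g(x) intersects the line x = x₁. -/
open Filter Set Topology

/-- A monotone periodic function is constant. -/
private lemma const_of_monotone_periodic {h : ℝ → ℝ} {T : ℝ} (hT : 0 < T)
    (hm : Monotone h) (hp : ∀ t, h (t + T) = h t) (s t : ℝ) : h s = h t := by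
  have hP : Function.Periodic h T := hp
  have key : ∀ a b : ℝ, a ≤ b → h a = h b := by
    intro a b hab
    obtain ⟨n, hn⟩ := exists_nat_ge ((b - a) / T)
    have hb : b ≤ a + n * T := by
      rw [div_le_iff₀ hT] at hn; linarith
    have hper : h (a + n * T) = h a := by
      have := hP.sub_nat_mul_eq (x := a + n * T) n
      simpa using this.symm
    exact le_antisymm (hm hab) (by calc h b ≤ h (a + n * T) := hm hb
                                      _ = h a := hper)
  rcases le_total s t with hst | hst
  · exact key s t hst
  · exact (key t s hst).symm

/-- If a periodic differentiable function has nonnegative derivative, the derivative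
vanishes identically. -/
private lemma deriv_zero_of_nonneg_periodic {h d : ℝ → ℝ} {T : ℝ} (hT : 0 < T)
    (hd : ∀ t, HasDerivAt h (d t) t) (hpos : ∀ t, 0 ≤ d t)
    (hp : ∀ t, h (t + T) = h t) : ∀ t, d t = 0 := by
  have hm : Monotone h := by
    apply monotone_of_deriv_nonneg (fun t => (hd t).differentiableAt)
    intro t; rw [(hd t).deriv]; exact hpos t
  have hc : ∀ s t, h s = h t := const_of_monotone_periodic hT hm hp
  intro t
  have h2 : HasDerivAt h 0 t := by
    have he : h = fun _ => h 0 := funext fun s => hc s 0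
    rw [he]; exact hasDerivAt_const _ _
  exact (hd t).unique h2

/-- Under hypotheses (A)–(C), if `G(x₁) ≤ G(x₂)` then every limit cycle of the
Liénard system intersects the line `x = x₁`. -/
theorem limit_cycle_intersects_right_line
    (f g : ℝ → ℝ) (hf : Continuous f) (hg : LocallyLipschitz g)
    (δ : ℝ) (hδ : 0 < δ) (hf0 : f 0 < 0) (hfpos : ∀ x : ℝ, δ < |x| → f x > 0)
    (hgsign : ∀ x : ℝ, x ≠ 0 → x * g x > 0)
    (F G : ℝ → ℝ) (hF : ∀ x, F x = ∫ ξ in (0:ℝ)..x, f ξ)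
    (hG : ∀ x, G x = ∫ ξ in (0:ℝ)..x, g ξ)
    (x₁ x₂ : ℝ) (hx₂ : x₂ < 0) (hx₁ : 0 < x₁)
    (hzeros : ∀ x, F x = 0 ↔ x = 0 ∨ x = x₁ ∨ x = x₂)
    (htrans : f x₁ ≠ 0 ∧ f x₂ ≠ 0)
    (hmono : StrictMonoOn F (Set.Iic x₂) ∧ StrictMonoOn F (Set.Ici x₁))
    (hGG : G x₁ ≤ G x₂) :
    ∀ x y : ℝ → ℝ, ∀ T : ℝ, IsLimitCycle F g x y T → ∃ t, x t = x₁ := by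
  intro x y T hLC
  obtain ⟨⟨hT, hx', hy', hper, hnc⟩, -⟩ := hLC
  by_contra hno
  push_neg at hno
  -- basic continuity facts
  have hgc : Continuous g := hg.continuous
  have hxdiff : Differentiable ℝ x := fun t => (hx' t).differentiableAt
  have hydiff : Differentiable ℝ y := fun t => (hy' t).differentiableAt
  have hxc : Continuous x := hxdiff.continuous
  have hyc : Continuous y := hydiff.continuous
  have hxP : Function.Periodic x T := fun t => (hper t).1
  have hyP : Function.Periodic y T := fun t => (hper t).2
  -- signs of g
  have hgneg : ∀ z : ℝ, z < 0 → g z < 0 := by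
    intro z hz; nlinarith [hgsign z hz.ne]
  have hgpos : ∀ z : ℝ, 0 < z → 0 < g z := by
    intro z hz; nlinarith [hgsign z hz.ne']
  have hg0 : g 0 = 0 := by
    have h1 : Tendsto g (𝓝[>] (0:ℝ)) (𝓝 (g 0)) :=
      (hgc.continuousAt.continuousWithinAt).tendsto
    have h2 : Tendsto g (𝓝[<] (0:ℝ)) (𝓝 (g 0)) :=
      (hgc.continuousAt.continuousWithinAt).tendsto
    have hge : 0 ≤ g 0 := by
      refine ge_of_tendsto h1 ?_
      filter_upwards [eventually_mem_nhdsWithin] with z hz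
      exact (hgpos z hz).le
    have hle : g 0 ≤ 0 := by
      refine le_of_tendsto h2 ?_
      filter_upwards [eventually_mem_nhdsWithin] with z hz
      exact (hgneg z hz).le
    linarith
  -- fundamental theorem of calculus
  have hFd : ∀ z : ℝ, HasDerivAt F (f z) z := by
    intro z
    have h0 : HasDerivAt (fun u => ∫ t in (0:ℝ)..u, f t) (f z) z :=
      intervalIntegral.integral_hasDerivAt_right (hf.intervalIntegrable _ _)
        (hf.stronglyMeasurableAtFilter _ _) hf.continuousAt
    have he : F = fun u => ∫ t in (0:ℝ)..u, f t := funext hF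
    rw [he]; exact h0
  have hGd : ∀ z : ℝ, HasDerivAt G (g z) z := by
    intro z
    have h0 : HasDerivAt (fun u => ∫ t in (0:ℝ)..u, g t) (g z) z :=
      intervalIntegral.integral_hasDerivAt_right (hgc.intervalIntegrable _ _)
        (hgc.stronglyMeasurableAtFilter _ _) hgc.continuousAt
    have he : G = fun u => ∫ t in (0:ℝ)..u, g t := funext hG
    rw [he]; exact h0
  have hFdiff : Differentiable ℝ F := fun z => (hFd z).differentiableAt
  have hGdiff : Differentiable ℝ G := fun z => (hGd z).differentiableAt
  have hFc : Continuous F := hFdiff.continuous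
  have hGc : Continuous G := hGdiff.continuous
  have hF0 : F 0 = 0 := by rw [hF]; exact intervalIntegral.integral_same
  have hG0 : G 0 = 0 := by rw [hG]; exact intervalIntegral.integral_same
  have hFx₁ : F x₁ = 0 := (hzeros x₁).mpr (Or.inr (Or.inl rfl))
  have hFx₂ : F x₂ = 0 := (hzeros x₂).mpr (Or.inr (Or.inr rfl))
  -- G is strictly decreasing on (-∞, 0] and strictly increasing on [0, x₁]
  have hGanti : StrictAntiOn G (Set.Iic (0:ℝ)) := by
    apply strictAntiOn_of_deriv_neg (convex_Iic 0) hGc.continuousOn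
    rw [interior_Iic]
    intro z hz; rw [(hGd z).deriv]; exact hgneg z hz
  have hGmonoR : StrictMonoOn G (Set.Icc 0 x₁) := by
    apply strictMonoOn_of_deriv_pos (convex_Icc 0 x₁) hGc.continuousOn
    rw [interior_Icc]
    intro z hz; rw [(hGd z).deriv]; exact hgpos z hz.1
  have hGx₂pos : 0 < G x₂ := by
    have := hGanti (le_of_lt hx₂) (le_refl (0:ℝ)) hx₂
    rwa [hG0] at this
  have hGle : ∀ z : ℝ, z ≤ x₂ → G x₂ ≤ G z := by
    intro z hz
    rcases eq_or_lt_of_le hz with he | hlt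
    · rw [he]
    · exact (hGanti (by linarith : z ≤ (0:ℝ)) (le_of_lt hx₂) hlt).le
  -- sign of F on (0, x₁) and (x₂, 0)
  have hslope : Tendsto (slope F 0) (𝓝[≠] (0:ℝ)) (𝓝 (f 0)) :=
    hasDerivAt_iff_tendsto_slope.mp (hFd 0)
  have hslopeneg : ∀ᶠ w in 𝓝[≠] (0:ℝ), slope F 0 w < 0 := hslope.eventually_lt_const hf0
  have hFnegR : ∀ z : ℝ, 0 < z → z < x₁ → F z < 0 := by
    intro z hz0 hz1
    obtain ⟨w, hw0, hwz, hwF⟩ : ∃ w : ℝ, 0 < w ∧ w < z ∧ F w < 0 := by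
      have h2 : ∀ᶠ w in 𝓝[>] (0:ℝ), slope F 0 w < 0 :=
        hslopeneg.filter_mono (nhdsWithin_mono _ (fun u hu => ne_of_gt hu))
      have h3 : ∀ᶠ w in 𝓝[>] (0:ℝ), w < z :=
        eventually_nhdsWithin_of_eventually_nhds (Tendsto.eventually_lt_const hz0 tendsto_id)
      obtain ⟨w, hs, hlt, hpos⟩ := (h2.and (h3.and eventually_mem_nhdsWithin)).exists
      rw [slope_def_field, hF0, sub_zero, sub_zero] at hs
      refine ⟨w, hpos, hlt, ?_⟩
      have h4 : F w / w * w < 0 := mul_neg_of_neg_of_pos hs hpos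
      rwa [div_mul_cancel₀ _ (ne_of_gt hpos)] at h4
    by_contra hFz
    push_neg at hFz
    obtain ⟨c, hc, hc0⟩ := intermediate_value_Icc hwz.le hFc.continuousOn ⟨hwF.le, hFz⟩
    rcases (hzeros c).mp hc0 with h | h | h
    · rw [h] at hc; linarith [hc.1]
    · rw [h] at hc; linarith [hc.2]
    · rw [h] at hc; linarith [hc.1]
  have hFposL : ∀ z : ℝ, x₂ < z → z < 0 → 0 < F z := by
    intro z hz2 hz0
    obtain ⟨w, hw0, hwz, hwF⟩ : ∃ w : ℝ, w < 0 ∧ z < w ∧ 0 < F w := by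
      have h2 : ∀ᶠ w in 𝓝[<] (0:ℝ), slope F 0 w < 0 :=
        hslopeneg.filter_mono (nhdsWithin_mono _ (fun u hu => ne_of_lt hu))
      have h3 : ∀ᶠ w in 𝓝[<] (0:ℝ), z < w :=
        eventually_nhdsWithin_of_eventually_nhds (Tendsto.eventually_const_lt hz0 tendsto_id)
      obtain ⟨w, hs, hlt, hneg⟩ := (h2.and (h3.and eventually_mem_nhdsWithin)).exists
      rw [slope_def_field, hF0, sub_zero, sub_zero] at hs
      have hw' : w < 0 := hneg
      refine ⟨w, hw', hlt, ?_⟩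
      rcases div_neg_iff.mp hs with ⟨h4, h5⟩ | ⟨h4, h5⟩
      · linarith
      · linarith
    by_contra hFz
    push_neg at hFz
    obtain ⟨c, hc, hc0⟩ := intermediate_value_Icc hwz.le hFc.continuousOn ⟨hFz, hwF.le⟩
    rcases (hzeros c).mp hc0 with h | h | h
    · rw [h] at hc; linarith [hc.2]
    · rw [h] at hc; linarith [hc.2]
    · rw [h] at hc; linarith [hc.1]
  -- key sign fact for the energy derivative
  have hVkey : ∀ z : ℝ, x₂ ≤ z → z < x₁ → 0 ≤ -(g z * F z) := by
    intro z h2 h1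
    rcases eq_or_lt_of_le h2 with he | h2
    · rw [← he, hFx₂]; simp
    rcases lt_trichotomy z 0 with hz | hz | hz
    · nlinarith [hgneg z hz, hFposL z h2 hz]
    · rw [hz, hg0]; simp
    · nlinarith [hgpos z hz, hFnegR z hz h1]
  -- the energy function
  set V : ℝ → ℝ := fun t => (y t) ^ 2 / 2 + G (x t) with hVdef
  have hV' : ∀ t, HasDerivAt V (-(g (x t) * F (x t))) t := by
    intro t
    have h1 : HasDerivAt (fun t => (y t) ^ 2 / 2) (y t * -(g (x t))) t := by
      have h2 := ((hy' t).pow 2).div_const 2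
      exact h2.congr_deriv (by norm_num; ring)
    have h3 : HasDerivAt (fun t => G (x t)) (g (x t) * (y t - F (x t))) t :=
      (hGd (x t)).comp t (hx' t)
    have h4 := h1.add h3
    exact h4.congr_deriv (by ring)
  have hVd : ∀ t, deriv V t = -(g (x t) * F (x t)) := fun t => (hV' t).deriv
  have hVdiff : Differentiable ℝ V := fun t => (hV' t).differentiableAt
  have hVP : ∀ t, V (t + T) = V t := by
    intro t; simp only [hVdef, hxP t, hyP t]
  -- degenerate case helper : x ≡ 0 is impossible
  have hdeg : (∀ t, x t = 0) → False := by
    intro h0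
    have hy0 : ∀ t, y t = 0 := by
      intro t
      have h2 : HasDerivAt x 0 t := by
        have he : x = fun _ => (0:ℝ) := funext h0
        rw [he]; exact hasDerivAt_const _ _
      have h3 := (hx' t).unique h2
      rw [h0 t, hF0] at h3; linarith
    exact hnc ⟨0, 0, fun t => ⟨h0 t, hy0 t⟩⟩
  -- x takes positive values
  have L1pos : ∃ t, 0 < x t := by
    by_contra h; push_neg at h
    have hz : ∀ t, -(g (x t)) = 0 := by
      apply deriv_zero_of_nonneg_periodic hT hy' _ hyP
      intro t
      rcases eq_or_lt_of_le (h t) with he | hlt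
      · rw [he, hg0]; simp
      · linarith [hgneg (x t) hlt]
    apply hdeg
    intro t
    by_contra hne
    have hlt2 : x t < 0 := lt_of_le_of_ne (h t) hne
    have h5 := hgneg (x t) hlt2
    have h6 := hz t
    linarith
  -- x takes negative values
  have L1neg : ∃ t, x t < 0 := by
    by_contra h; push_neg at h
    have hnegy' : ∀ t, HasDerivAt (fun t => -(y t)) (g (x t)) t := by
      intro t
      have h1 := (hy' t).neg
      exact h1.congr_deriv (by ring)
    have hz : ∀ t, g (x t) = 0 := by
      apply deriv_zero_of_nonneg_periodic hT hnegy' _ (fun t => by simp [hyP t])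
      intro t
      rcases eq_or_lt_of_le (h t) with he | hlt
      · rw [← he, hg0]
      · linarith [hgpos (x t) hlt]
    apply hdeg
    intro t
    by_contra hne
    have hlt2 : 0 < x t := lt_of_le_of_ne (h t) (Ne.symm hne)
    have h5 := hgpos (x t) hlt2
    have h6 := hz t
    linarith
  -- the orbit stays strictly to the left of x₁
  have hlt : ∀ t, x t < x₁ := by
    intro t
    rcases lt_or_gt_of_ne (hno t) with h | h
    · exact h
    · exfalso
      obtain ⟨s, hs⟩ := L1neg
      have hmem : x₁ ∈ Set.uIcc (x s) (x t) := by
        rw [Set.mem_uIcc]; left; constructor <;> linarith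
      obtain ⟨c, -, hc⟩ := intermediate_value_uIcc hxc.continuousOn hmem
      exact hno c hc
  -- case split: does the orbit reach x ≤ x₂ ?
  by_cases hB : ∃ s, x s ≤ x₂
  · -- Step 1: V(t) ≥ G(x₂) for every t
    have hVlb : ∀ t, G x₂ ≤ V t := by
      intro t₀
      rcases le_or_gt (x t₀) x₂ with hle0 | hgt0
      · have h1 := hGle (x t₀) hle0
        have h2 : 0 ≤ (y t₀) ^ 2 / 2 := by positivity
        simp only [hVdef]; linarith
      · obtain ⟨s₀, hs₀⟩ := hB
        set A : Set ℝ := Set.Iic t₀ ∩ x ⁻¹' Set.Iic x₂ with hA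
        have hAne : A.Nonempty := by
          obtain ⟨n, hn⟩ := exists_nat_ge ((s₀ - t₀) / T)
          rw [div_le_iff₀ hT] at hn
          refine ⟨s₀ - n * T, Set.mem_inter (Set.mem_Iic.mpr (by linarith)) ?_⟩
          rw [Set.mem_preimage, Set.mem_Iic, hxP.sub_nat_mul_eq n]
          exact hs₀
        have hAbdd : BddAbove A := ⟨t₀, fun s hs => hs.1⟩
        have hAcl : IsClosed A := isClosed_Iic.inter (isClosed_Iic.preimage hxc)
        set ss : ℝ := sSup A with hss
        have hsA : ss ∈ A := hAcl.csSup_mem hAne hAbdd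
        have hsle : ss ≤ t₀ := hsA.1
        have hsx : x ss ≤ x₂ := hsA.2
        have hslt : ss < t₀ := lt_of_le_of_ne hsle (fun h => by rw [h] at hsx; linarith)
        have hmid : ∀ u, ss < u → u ≤ t₀ → x₂ < x u := by
          intro u h1 h2
          by_contra hcon; push_neg at hcon
          exact absurd (le_csSup hAbdd (Set.mem_inter (Set.mem_Iic.mpr h2) hcon))
            (not_le.mpr h1)
        have hsx2 : x ss = x₂ := by
          refine le_antisymm hsx ?_
          have htd : Tendsto x (𝓝[>] ss) (𝓝 (x ss)) :=
            (hxc.continuousAt.continuousWithinAt).tendsto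
          refine ge_of_tendsto htd ?_
          filter_upwards [Ioo_mem_nhdsGT_of_mem ⟨le_refl ss, hslt⟩] with u hu
          exact (hmid u hu.1 hu.2.le).le
        have hmon : MonotoneOn V (Set.Icc ss t₀) := by
          apply monotoneOn_of_deriv_nonneg (convex_Icc _ _) hVdiff.continuous.continuousOn
            (fun u _ => (hVdiff u).differentiableWithinAt)
          intro u hu
          rw [interior_Icc] at hu
          rw [hVd u]
          exact hVkey (x u) (hmid u hu.1 hu.2.le).le (hlt u)
        have h1 : V ss ≤ V t₀ := hmon ⟨le_refl _, hsle⟩ ⟨hsle, le_refl _⟩ hsle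
        have h2 : G x₂ ≤ V ss := by
          simp only [hVdef]; rw [hsx2]; nlinarith [sq_nonneg (y ss)]
        linarith
    -- Step 2: find a time e with x e > 0 and y e = 0
    obtain ⟨tp, htp⟩ := L1pos
    obtain ⟨s₀, hs₀⟩ := hB
    set B : Set ℝ := Set.Iic tp ∩ x ⁻¹' Set.Iic 0 with hBdef
    have hBne : B.Nonempty := by
      obtain ⟨n, hn⟩ := exists_nat_ge ((s₀ - tp) / T)
      rw [div_le_iff₀ hT] at hn
      refine ⟨s₀ - n * T, Set.mem_inter (Set.mem_Iic.mpr (by linarith)) ?_⟩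
      rw [Set.mem_preimage, Set.mem_Iic, hxP.sub_nat_mul_eq n]
      linarith
    have hBbdd : BddAbove B := ⟨tp, fun s hs => hs.1⟩
    have hBcl : IsClosed B := isClosed_Iic.inter (isClosed_Iic.preimage hxc)
    set c : ℝ := sSup B with hcdef
    have hcB : c ∈ B := hBcl.csSup_mem hBne hBbdd
    have hcle : c ≤ tp := hcB.1
    have hcx : x c ≤ 0 := hcB.2
    have hclt : c < tp := lt_of_le_of_ne hcle (fun h => by rw [h] at hcx; linarith)
    have hmidB : ∀ u, c < u → u ≤ tp → 0 < x u := by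
      intro u h1 h2; by_contra hcon; push_neg at hcon
      exact absurd (le_csSup hBbdd (Set.mem_inter (Set.mem_Iic.mpr h2) hcon)) (not_le.mpr h1)
    have hxc0 : x c = 0 := by
      refine le_antisymm hcx ?_
      have htd : Tendsto x (𝓝[>] c) (𝓝 (x c)) := (hxc.continuousAt.continuousWithinAt).tendsto
      refine ge_of_tendsto htd ?_
      filter_upwards [Ioo_mem_nhdsGT_of_mem ⟨le_refl c, hclt⟩] with u hu
      exact (hmidB u hu.1 hu.2.le).le
    set C : Set ℝ := Set.Ici tp ∩ x ⁻¹' Set.Iic 0 with hCdef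
    have hCne : C.Nonempty := by
      obtain ⟨n, hn⟩ := exists_nat_ge ((tp - s₀) / T)
      rw [div_le_iff₀ hT] at hn
      refine ⟨s₀ + n * T, Set.mem_inter (Set.mem_Ici.mpr (by linarith)) ?_⟩
      rw [Set.mem_preimage, Set.mem_Iic]
      have hh : x (s₀ + n * T) = x s₀ := by
        have := hxP.sub_nat_mul_eq (x := s₀ + n * T) n
        simpa using this.symm
      rw [hh]; linarith
    have hCbdd : BddBelow C := ⟨tp, fun s hs => hs.1⟩
    have hCcl : IsClosed C := isClosed_Ici.inter (isClosed_Iic.preimage hxc)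
    set d : ℝ := sInf C with hddef
    have hdC : d ∈ C := hCcl.csInf_mem hCne hCbdd
    have hdge : tp ≤ d := hdC.1
    have hdx : x d ≤ 0 := hdC.2
    have hdgt : tp < d := lt_of_le_of_ne hdge (fun h => by rw [← h] at hdx; linarith)
    have hmidC : ∀ u, tp ≤ u → u < d → 0 < x u := by
      intro u h1 h2; by_contra hcon; push_neg at hcon
      exact absurd (csInf_le hCbdd (Set.mem_inter (Set.mem_Ici.mpr h1) hcon)) (not_le.mpr h2)
    have hxd0 : x d = 0 := by
      refine le_antisymm hdx ?_
      have htd : Tendsto x (𝓝[<] d) (𝓝 (x d)) := (hxc.continuousAt.continuousWithinAt).tendsto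
      refine ge_of_tendsto htd ?_
      filter_upwards [Ioo_mem_nhdsLT_of_mem ⟨hdgt, le_refl d⟩] with u hu
      exact (hmidC u hu.1.le hu.2).le
    have hpos_cd : ∀ u, c < u → u < d → 0 < x u := by
      intro u h1 h2
      rcases le_or_gt u tp with h3 | h3
      · exact hmidB u h1 h3
      · exact hmidC u h3.le h2
    -- y c > 0
    have hyc_pos : 0 < y c := by
      have hyc_nonneg : 0 ≤ y c := by
        by_contra hneg; push_neg at hneg
        have hxdc : HasDerivAt x (y c) c := by
          have h1 := hx' c; rwa [hxc0, hF0, sub_zero] at h1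
        have hsl : Tendsto (slope x c) (𝓝[≠] c) (𝓝 (y c)) :=
          hasDerivAt_iff_tendsto_slope.mp hxdc
        have h2 : ∀ᶠ u in 𝓝[>] c, slope x c u < 0 :=
          (hsl.eventually_lt_const hneg).filter_mono (nhdsWithin_mono _ (fun u hu => hu.ne'))
        have h3 : Set.Ioo c tp ∈ 𝓝[>] c := Ioo_mem_nhdsGT_of_mem ⟨le_refl c, hclt⟩
        obtain ⟨u, hsu, hu⟩ := (h2.and (eventually_of_mem h3 (fun u hu => hu))).exists
        rw [slope_def_field, hxc0, sub_zero] at hsu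
        have h5 : x u / (u - c) * (u - c) < 0 := mul_neg_of_neg_of_pos hsu (by linarith [hu.1])
        rw [div_mul_cancel₀ _ (by linarith [hu.1] : u - c ≠ 0)] at h5
        exact absurd h5 (not_lt.mpr (hmidB u hu.1 hu.2.le).le)
      rcases hyc_nonneg.lt_or_eq with h | h
      · exact h
      · exfalso
        have h1 : G x₂ ≤ V c := hVlb c
        have h2 : V c = 0 := by
          simp only [hVdef]; rw [hxc0, hG0, ← h]; norm_num
        linarith
    -- y d < 0
    have hyd_neg : y d < 0 := by
      have hyd_nonpos : y d ≤ 0 := by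
        by_contra hneg; push_neg at hneg
        have hxdd : HasDerivAt x (y d) d := by
          have h1 := hx' d; rwa [hxd0, hF0, sub_zero] at h1
        have hsl : Tendsto (slope x d) (𝓝[≠] d) (𝓝 (y d)) :=
          hasDerivAt_iff_tendsto_slope.mp hxdd
        have h2 : ∀ᶠ u in 𝓝[<] d, 0 < slope x d u :=
          (hsl.eventually_const_lt hneg).filter_mono (nhdsWithin_mono _ (fun u hu => hu.ne))
        have h3 : Set.Ioo tp d ∈ 𝓝[<] d := Ioo_mem_nhdsLT_of_mem ⟨hdgt, le_refl d⟩
        obtain ⟨u, hsu, hu⟩ := (h2.and (eventually_of_mem h3 (fun u hu => hu))).exists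
        rw [slope_def_field, hxd0, sub_zero] at hsu
        have hu1 : tp < u := hu.1
        have hu2 : u < d := hu.2
        rcases div_pos_iff.mp hsu with ⟨h4, h5⟩ | ⟨h4, h5⟩
        · linarith
        · exact absurd h4 (not_lt.mpr (hmidC u hu1.le hu2).le)
      rcases hyd_nonpos.lt_or_eq with h | h
      · exact h
      · exfalso
        have h1 : G x₂ ≤ V d := hVlb d
        have h2 : V d = 0 := by
          simp only [hVdef]; rw [hxd0, hG0, h]; norm_num
        linarith
    -- the crossing time e
    obtain ⟨e, he, hye⟩ := intermediate_value_Icc' (le_of_lt (lt_trans hclt hdgt))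
      hyc.continuousOn ⟨hyd_neg.le, hyc_pos.le⟩
    have hec : e ≠ c := by
      intro h; rw [h] at hye; rw [hye] at hyc_pos; exact lt_irrefl 0 hyc_pos
    have hed : e ≠ d := by
      intro h; rw [h] at hye; rw [hye] at hyd_neg; exact lt_irrefl 0 hyd_neg
    have hxe_pos : 0 < x e :=
      hpos_cd e (lt_of_le_of_ne he.1 (Ne.symm hec)) (lt_of_le_of_ne he.2 hed)
    -- final contradiction
    have h1 : G x₂ ≤ V e := hVlb e
    have h2 : V e = G (x e) := by
      simp only [hVdef]; rw [hye]; norm_num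
    have h3 : G (x e) < G x₁ :=
      hGmonoR ⟨hxe_pos.le, (hlt e).le⟩ ⟨hx₁.le, le_refl x₁⟩ (hlt e)
    linarith
  · -- remaining case : orbit stays in (x₂, x₁) : degenerate
    push_neg at hB
    have hz : ∀ t, -(g (x t) * F (x t)) = 0 :=
      deriv_zero_of_nonneg_periodic hT hV' (fun t => hVkey (x t) (hB t).le (hlt t)) hVP
    apply hdeg
    intro t
    by_contra hne
    have hgne : g (x t) ≠ 0 := by
      rcases lt_trichotomy (x t) 0 with h | h | h
      · exact (hgneg _ h).ne
      · exact absurd h hne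
      · exact (hgpos _ h).ne'
    have hFne : F (x t) ≠ 0 := by
      intro h0
      rcases (hzeros _).mp h0 with h | h | h
      · exact hne h
      · exact hno t h
      · exact absurd h (by have := hB t; intro he; rw [he] at this; linarith)
    have h6 := neg_eq_zero.mp (hz t)
    exact (mul_ne_zero hgne hFne) h6
end

section
/- Under assumption (D'), any orbit of the Liénard system passing through a point (x₂*, y_B) with y_B ≥ F(x₂*) ≥ √(2G(x₁)) subsequently crosses the y-axis at a point (0, y_{B'}) with y_{B'} > √(2G(x₁)), because the energy Λ(x,y) = y²/2 + G(x) is nondecreasing along the flow in the region where F(x)g(x) ≤ 0. -/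
open Set Filter Topology

/-- If `h` has positive derivative at a first hitting time `t₁` of level `c`
from above, we get a contradiction. -/
lemma lienard_aux_slope_contra {h : ℝ → ℝ} {d t₀ t₁ c : ℝ} (ht₁ : t₀ < t₁)
    (hd : HasDerivAt h d t₁) (hdpos : 0 < d) (hval : h t₁ = c)
    (hbefore : ∀ t, t₀ ≤ t → t < t₁ → c < h t) : False := by
  have h1 : Tendsto (slope h t₁) (𝓝[≠] t₁) (𝓝 d) :=
    hasDerivAt_iff_tendsto_slope.1 hd
  have h2 : ∀ᶠ t in 𝓝[≠] t₁, 0 < slope h t₁ t :=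
    h1.eventually (eventually_gt_nhds hdpos)
  have hmono : 𝓝[<] t₁ ≤ 𝓝[≠] t₁ := nhdsWithin_mono _ (fun x hx => ne_of_lt hx)
  have h3 : ∀ᶠ t in 𝓝[<] t₁, 0 < slope h t₁ t := h2.filter_mono hmono
  have h4 : Ioo t₀ t₁ ∈ 𝓝[<] t₁ := Ioo_mem_nhdsLT_of_mem ⟨ht₁, le_refl _⟩
  obtain ⟨t, htslope, htI⟩ := (h3.and (eventually_of_mem h4 (fun x hx => hx))).exists
  have hlt : t - t₁ < 0 := by linarith [htI.2]
  have hslope : 0 < (h t - c) / (t - t₁) := by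
    simpa [slope, hval, div_eq_inv_mul] using htslope
  have hht : c < h t := hbefore t (le_of_lt htI.1) htI.2
  rcases div_pos_iff.1 hslope with ⟨_, h'⟩ | ⟨h', _⟩
  · linarith
  · linarith

/-- First hitting time of level `c` from above for a continuous function. -/
lemma lienard_aux_first_hit {h : ℝ → ℝ} (hc : Continuous h) {t₀ c : ℝ}
    (h0 : c < h t₀) {s : ℝ} (hs : t₀ ≤ s) (hsc : h s ≤ c) :
    ∃ t₁, t₀ < t₁ ∧ h t₁ = c ∧ ∀ t, t₀ ≤ t → t < t₁ → c < h t := by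
  set S := {t | t₀ ≤ t ∧ h t ≤ c} with hS
  have hSc : IsClosed S := by
    have : S = Ici t₀ ∩ h ⁻¹' Iic c := by ext t; simp [hS, Set.mem_setOf_eq]
    rw [this]; exact isClosed_Ici.inter (isClosed_Iic.preimage hc)
  have hne : S.Nonempty := ⟨s, hs, hsc⟩
  have hbd : BddBelow S := ⟨t₀, fun t ht => ht.1⟩
  have hmem : sInf S ∈ S := hSc.csInf_mem hne hbd
  set t₁ := sInf S with ht₁def
  have ht₀₁ : t₀ ≤ t₁ := hmem.1
  have hbefore : ∀ t, t₀ ≤ t → t < t₁ → c < h t := by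
    intro t ht htl
    by_contra hle
    push_neg at hle
    exact absurd (csInf_le hbd ⟨ht, hle⟩) (not_le.2 htl)
  have ht₁pos : t₀ < t₁ := by
    rcases lt_or_eq_of_le ht₀₁ with h' | h'
    · exact h'
    · exact absurd hmem.2 (not_le.2 (h' ▸ h0))
  have hge : c ≤ h t₁ := by
    have htend : Tendsto h (𝓝[<] t₁) (𝓝 (h t₁)) :=
      (hc.tendsto t₁).mono_left nhdsWithin_le_nhds
    refine ge_of_tendsto htend ?_
    have h4 : Ioo t₀ t₁ ∈ 𝓝[<] t₁ := Ioo_mem_nhdsLT_of_mem ⟨ht₁pos, le_refl _⟩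
    filter_upwards [h4] with t ht
    exact (hbefore t (le_of_lt ht.1) ht.2).le
  exact ⟨t₁, ht₁pos, le_antisymm hmem.2 hge, hbefore⟩

/-- Linear growth from a derivative lower bound. -/
lemma lienard_aux_grow {h h' : ℝ → ℝ} (hd : ∀ t, HasDerivAt h (h' t) t) {T K : ℝ}
    (hK : ∀ t, T ≤ t → K ≤ h' t) : ∀ t, T ≤ t → h T + K * (t - T) ≤ h t := by
  have hdiff : Differentiable ℝ h := fun t => (hd t).differentiableAt
  have hcont : Continuous h := hdiff.continuous
  have mono : MonotoneOn (fun t => h t - K * t) (Ici T) := by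
    apply monotoneOn_of_deriv_nonneg (convex_Ici T)
    · exact (hcont.sub (continuous_const.mul continuous_id)).continuousOn
    · intro x _
      exact (((hd x).sub (by simpa using (hasDerivAt_id x).const_mul K))).differentiableAt.differentiableWithinAt
    · intro x hx
      rw [interior_Ici] at hx
      have hder : HasDerivAt (fun t => h t - K * t) (h' x - K) x := by
        have := (hd x).sub ((hasDerivAt_id x).const_mul K); rw [mul_one] at this; exact this
      rw [hder.deriv]
      linarith [hK x (le_of_lt hx)]
  intro t ht
  have := mono self_mem_Ici (mem_Ici.2 ht) ht
  simp only at this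
  linarith

/-- Under assumption (D'), any orbit of the Liénard system passing through
`(x₂*, y_B)` with `y_B ≥ F(x₂*) ≥ √(2G(x₁))` subsequently crosses the `y`-axis
at a point `(0, y_B')` with `y_B' > √(2G(x₁))`. -/
theorem lienard_orbit_crosses_y_axis_high
    (f g : ℝ → ℝ) (hf : Continuous f) (hg : LocallyLipschitz g)
    (hgsign : ∀ x : ℝ, x ≠ 0 → x * g x > 0)
    (F G : ℝ → ℝ) (hF : ∀ x, F x = ∫ ξ in (0:ℝ)..x, f ξ)
    (hG : ∀ x, G x = ∫ ξ in (0:ℝ)..x, g ξ)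
    (x₁ x₂ : ℝ) (hx₂ : x₂ < 0) (hx₁ : 0 < x₁)
    (hF0 : F 0 = 0) (hFx₁ : F x₁ = 0) (hFx₂ : F x₂ = 0)
    (hFpos : ∀ x, x₂ < x → x < 0 → F x > 0)
    (x₂s : ℝ) (hx₂s : x₂s ∈ Set.Ioo x₂ 0)
    (hDp : F x₂s ≥ Real.sqrt (2 * G x₁))
    (a b : ℝ → ℝ)
    (ha : ∀ t, HasDerivAt a (b t - F (a t)) t)
    (hb : ∀ t, HasDerivAt b (-(g (a t))) t)
    (yB : ℝ) (hyB : yB ≥ F x₂s) (ha0 : a 0 = x₂s) (hb0 : b 0 = yB) :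
    ∃ t > (0:ℝ), a t = 0 ∧ b t > Real.sqrt (2 * G x₁) := by
  -- basic continuity facts
  have hFc : Continuous F := by
    have h1 : Continuous fun x => ∫ ξ in (0:ℝ)..x, f ξ :=
      intervalIntegral.continuous_primitive (fun a b => hf.intervalIntegrable a b) 0
    have h2 : F = fun x => ∫ ξ in (0:ℝ)..x, f ξ := funext hF
    rw [h2]; exact h1
  have hgc : Continuous g := hg.continuous
  have hgneg : ∀ x : ℝ, x < 0 → g x < 0 := by
    intro x hx
    by_contra hge
    push_neg at hge
    nlinarith [hgsign x (ne_of_lt hx)]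
  have hadiff : Differentiable ℝ a := fun t => (ha t).differentiableAt
  have hacont : Continuous a := hadiff.continuous
  have hbdiff : Differentiable ℝ b := fun t => (hb t).differentiableAt
  have hbcont : Continuous b := hbdiff.continuous
  have hFx₂spos : 0 < F x₂s := hFpos x₂s hx₂s.1 hx₂s.2
  have hyBpos : 0 < yB := lt_of_lt_of_le hFx₂spos hyB
  -- Key claim: the orbit reaches the y-axis
  have hreach : ∃ t > (0:ℝ), a t = 0 := by
    by_contra hno
    push_neg at hno
    -- a stays negative
    have haneg : ∀ t, 0 ≤ t → a t < 0 := by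
      intro t ht
      rcases eq_or_lt_of_le ht with h' | h'
      · rw [← h', ha0]; exact hx₂s.2
      · rcases lt_trichotomy (a t) 0 with hlt | heq | hgt
        · exact hlt
        · exact absurd heq (hno t h')
        · have h0mem : (0:ℝ) ∈ Ioo (a 0) (a t) := by
            constructor
            · rw [ha0]; exact hx₂s.2
            · exact hgt
          obtain ⟨s, hsI, hs0⟩ :=
            intermediate_value_Ioo (le_of_lt h') hacont.continuousOn h0mem
          exact absurd hs0 (hno s hsI.1)
    -- b is bounded below by yB for t ≥ 0
    have hbge : ∀ t, 0 ≤ t → yB ≤ b t := by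
      intro t ht
      have := lienard_aux_grow hb (T := 0) (K := 0)
        (fun s hs => by
          have := hgneg (a s) (haneg s hs)
          linarith) t ht
      simpa [hb0] using this
    -- a stays above x₂
    have hax₂ : ∀ t, 0 ≤ t → x₂ < a t := by
      by_contra hc
      push_neg at hc
      obtain ⟨s, hs0, hsle⟩ := hc
      have h0 : x₂ < a 0 := by rw [ha0]; exact hx₂s.1
      obtain ⟨t₁, ht₁pos, ht₁val, ht₁before⟩ :=
        lienard_aux_first_hit hacont h0 hs0 hsle
      have hder : HasDerivAt a (b t₁ - F (a t₁)) t₁ := ha t₁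
      have hdpos : 0 < b t₁ - F (a t₁) := by
        rw [ht₁val, hFx₂]
        have := hbge t₁ (le_of_lt ht₁pos)
        linarith
      exact lienard_aux_slope_contra ht₁pos hder hdpos ht₁val ht₁before
    -- choose δ < 0 close to 0 with F < yB/2 on [δ, 0]
    have hF0' : ContinuousAt F 0 := hFc.continuousAt
    obtain ⟨ε, hεpos, hε⟩ := Metric.continuousAt_iff.1 hF0' (yB / 2) (by positivity)
    set δ : ℝ := max x₂s (-(ε / 2)) with hδdef
    have hδneg : δ < 0 := max_lt hx₂s.2 (by linarith)
    have hδx₂ : x₂ < δ := lt_of_lt_of_le hx₂s.1 (le_max_left _ _)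
    have hFδ : ∀ x, δ ≤ x → x ≤ 0 → F x < yB / 2 := by
      intro x hxl hxr
      have hxε : dist x 0 < ε := by
        rw [Real.dist_eq, sub_zero, abs_of_nonpos hxr]
        have : -(ε / 2) ≤ δ := le_max_right _ _
        linarith
      have := hε hxε
      rw [Real.dist_eq, hF0, sub_zero] at this
      calc F x ≤ |F x| := le_abs_self _
        _ < yB / 2 := this
    by_cases hcase : ∀ t, 0 ≤ t → a t ≤ δ
    · -- a trapped in [x₂, δ]: b grows linearly, then a escapes to +∞
      have hIcc : (Icc x₂ δ).Nonempty := nonempty_Icc.2 (le_of_lt hδx₂)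
      obtain ⟨xg, hxgI, hxgM⟩ :=
        isCompact_Icc.exists_isMaxOn hIcc hgc.continuousOn
      set c : ℝ := -(g xg) with hcdef
      have hcpos : 0 < c := by
        have : g xg < 0 := hgneg xg (lt_of_le_of_lt hxgI.2 hδneg)
        linarith
      have hamem : ∀ t, 0 ≤ t → a t ∈ Icc x₂ δ := fun t ht =>
        ⟨(hax₂ t ht).le, hcase t ht⟩
      have hbgrow : ∀ t, 0 ≤ t → yB + c * t ≤ b t := by
        intro t ht
        have := lienard_aux_grow hb (T := 0) (K := c)
          (fun s hs => by
            have hgg : g (a s) ≤ g xg := hxgM (hamem s hs)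
            rw [hcdef]
            linarith) t ht
        simpa [hb0] using this
      obtain ⟨xF, hxFI, hxFM⟩ :=
        isCompact_Icc.exists_isMaxOn hIcc hFc.continuousOn
      set M : ℝ := F xF with hMdef
      set T₁ : ℝ := max 0 ((M + 1 - yB) / c) with hT₁def
      have hT₁0 : 0 ≤ T₁ := le_max_left _ _
      have hagrow : ∀ t, T₁ ≤ t → a T₁ + 1 * (t - T₁) ≤ a t := by
        apply lienard_aux_grow ha
        intro s hs
        have hs0 : 0 ≤ s := le_trans hT₁0 hs
        have hbs : M + 1 ≤ b s := by
          have h1 := hbgrow s hs0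
          have h2 : (M + 1 - yB) / c ≤ s := le_trans (le_trans (le_max_right _ _) hs) (le_refl _)
          have h3 : M + 1 - yB ≤ c * s := by
            rw [div_le_iff₀ hcpos] at h2
            linarith [h2]
          linarith
        have hFs : F (a s) ≤ M := by have : F (a s) ≤ F xF := hxFM (hamem s hs0); rw [hMdef]; linarith
        linarith
      have hfinal := hagrow (T₁ + 1 - x₂) (by linarith)
      have haT₁ : x₂ < a T₁ := hax₂ T₁ hT₁0
      have hneg := haneg (T₁ + 1 - x₂) (by linarith)
      linarith
    · -- a gets above δ at some time t₂ and then stays in (δ, 0), escaping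
      push_neg at hcase
      obtain ⟨t₂, ht₂0, ht₂δ⟩ := hcase
      have hinv : ∀ t, t₂ ≤ t → δ < a t := by
        by_contra hc
        push_neg at hc
        obtain ⟨s, hs2, hsle⟩ := hc
        obtain ⟨t₁, ht₁pos, ht₁val, ht₁before⟩ :=
          lienard_aux_first_hit hacont ht₂δ hs2 hsle
        have hder : HasDerivAt a (b t₁ - F (a t₁)) t₁ := ha t₁
        have hdpos : 0 < b t₁ - F (a t₁) := by
          rw [ht₁val]
          have h1 : F δ < yB / 2 := hFδ δ (le_refl _) hδneg.le
          have h2 : yB ≤ b t₁ := hbge t₁ (le_trans ht₂0 ht₁pos.le)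
          linarith
        exact lienard_aux_slope_contra ht₁pos hder hdpos ht₁val ht₁before
      have hagrow : ∀ t, t₂ ≤ t → a t₂ + (yB / 2) * (t - t₂) ≤ a t := by
        apply lienard_aux_grow ha
        intro s hs
        have hs0 : 0 ≤ s := le_trans ht₂0 hs
        have h1 : F (a s) < yB / 2 := hFδ (a s) (hinv s hs).le (haneg s hs0).le
        have h2 : yB ≤ b s := hbge s hs0
        linarith
      set s : ℝ := (-2 * δ) / yB + 1 with hsdef
      have hspos : 0 < s := by
        rw [hsdef]
        have : 0 ≤ (-2 * δ) / yB := div_nonneg (by linarith) hyBpos.le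
        linarith
      have hfinal := hagrow (t₂ + s) (by linarith)
      have hys : yB / 2 * s = -δ + yB / 2 := by
        field_simp [hsdef]
        rw [hsdef, mul_add, mul_div_cancel₀ _ hyBpos.ne']
        ring
      have hneg := haneg (t₂ + s) (by linarith)
      rw [show t₂ + s - t₂ = s by ring] at hfinal
      rw [hys] at hfinal
      linarith
  -- Now take the first crossing time
  obtain ⟨t₀, ht₀pos, ht₀z⟩ := hreach
  have hneg0 : (0:ℝ) < -a 0 := by rw [ha0]; linarith [hx₂s.2]
  have hhit0 : -a t₀ ≤ 0 := by rw [ht₀z]; norm_num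
  obtain ⟨t₁, ht₁pos, ht₁val, ht₁before⟩ :=
    lienard_aux_first_hit (hacont.neg) hneg0 ht₀pos.le hhit0
  have hat₁ : a t₁ = 0 := by linarith [neg_eq_zero.1 ht₁val]
  have hanegbefore : ∀ t, 0 ≤ t → t < t₁ → a t < 0 := by
    intro t h1 h2
    have : 0 < -a t := ht₁before t h1 h2
    linarith
  -- b is strictly increasing on [0, t₁]
  have hbmono : StrictMonoOn b (Icc 0 t₁) := by
    apply strictMonoOn_of_deriv_pos (convex_Icc 0 t₁) hbcont.continuousOn
    intro x hx
    rw [interior_Icc] at hx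
    rw [(hb x).deriv]
    have := hgneg (a x) (hanegbefore x hx.1.le hx.2)
    linarith
  have hblt : b 0 < b t₁ :=
    hbmono (left_mem_Icc.2 ht₁pos.le) (right_mem_Icc.2 ht₁pos.le) ht₁pos
  refine ⟨t₁, ht₁pos, hat₁, ?_⟩
  calc Real.sqrt (2 * G x₁) ≤ F x₂s := hDp
    _ ≤ yB := hyB
    _ = b 0 := hb0.symm
    _ < b t₁ := hblt
end
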